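/- arXiv:1606.03802 — 7 statements merged into one kernel-verified Lean document; each statement's English description precedes it below -/
import Mathlib

section
/- (Theorem 1, forward direction.) If the bias term b is negative, then the positively labeled region {x ∈ ℝ^d : Σᵢ₌₁^m yᵢ αᵢ K(xᵢ, x) + b > 0} is a bounded subset of ℝ^d. -/
/-!
Every Gaussian term `exp (-γ ‖xᵢ - x‖²)` tends to `0` as `x` leaves bounded sets, hence so does
the kernel sum. Since `-b > 0`, the sum exceeds `-b` only on a bounded set.
-/

open Filter Topology Bornology

theorem Bornology.IsBounded.setOf_lt_of_tendsto_cobounded_nhds_zero {α : Type*} [Bornology α]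
    {f : α → ℝ} (hf : Tendsto f (cobounded α) (𝓝 0)) {ε : ℝ} (hε : 0 < ε) :
    IsBounded {x | ε < f x} := by
  rw [isBounded_def]
  filter_upwards [hf.eventually (gt_mem_nhds hε)] with x hx using not_lt.2 hx.le

theorem tendsto_exp_neg_mul_dist_sq_cobounded {α : Type*} [PseudoMetricSpace α] {γ : ℝ}
    (hγ : 0 < γ) (c : α) :
    Tendsto (fun x => Real.exp (-γ * dist c x ^ 2)) (cobounded α) (𝓝 0) := by
  have hsq : Tendsto (fun x => dist c x ^ 2) (cobounded α) atTop :=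
    (tendsto_pow_atTop two_ne_zero).comp (Metric.tendsto_dist_left_cobounded_atTop c)
  exact Real.tendsto_exp_atBot.comp (hsq.const_mul_atTop_of_neg (neg_neg_of_pos hγ))

theorem negative_bias_bounded_positive_region_general (d m : ℕ) (γ : ℝ) (hγ : 0 < γ)
    (xs : Fin m → EuclideanSpace ℝ (Fin d)) (y α : Fin m → ℝ)
    (b : ℝ) (hb : b < 0) :
    Bornology.IsBounded {x : EuclideanSpace ℝ (Fin d) |
      0 < (∑ i, y i * α i * Real.exp (-γ * ‖xs i - x‖ ^ 2)) + b} := by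
  have hdecay : Tendsto (fun x => ∑ i, y i * α i * Real.exp (-γ * dist (xs i) x ^ 2))
      (cobounded _) (𝓝 0) := by
    simpa only [mul_zero, Finset.sum_const_zero] using tendsto_finsetSum Finset.univ fun i _ =>
      (tendsto_exp_neg_mul_dist_sq_cobounded hγ (xs i)).const_mul (y i * α i)
  simpa only [neg_lt_iff_pos_add, dist_eq_norm] using
    IsBounded.setOf_lt_of_tendsto_cobounded_nhds_zero hdecay (neg_pos.2 hb)

/-- Theorem 1, forward direction: If the bias term b is negative, then
the positively labeled region {x : Σᵢ yᵢ αᵢ K(xᵢ, x) + b > 0} is bounded. -/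
theorem negative_bias_bounded_positive_region (d m : ℕ) (hm : 1 ≤ m) (γ : ℝ) (hγ : 0 < γ)
    (xs : Fin m → EuclideanSpace ℝ (Fin d)) (y α : Fin m → ℝ)
    (hy : ∀ i, y i = -1 ∨ y i = 1) (hα : ∀ i, 0 ≤ α i)
    (b : ℝ) (hb : b < 0) :
    Bornology.IsBounded {x : EuclideanSpace ℝ (Fin d) |
      0 < (∑ i, y i * α i * Real.exp (-γ * ‖xs i - x‖ ^ 2)) + b} :=
  negative_bias_bounded_positive_region_general d m γ hγ xs y α b hb
end

section
/- (Theorem 1, converse direction.) If the bias term b is positive, then there exists d₀ > 0 such that every x ∈ ℝ^d satisfying ‖x − xᵢ‖ > d₀ for all i = 1, …, m has positive decision value f(x) = Σᵢ₌₁^m yᵢ αᵢ K(xᵢ, x) + b > 0; consequently, if d ≥ 1, the positively labeled region is an unbounded subset of ℝ^d. -/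
/-!
Each Gaussian term `exp (-γ ‖xᵢ - x‖²)` is at most `exp (-γ d₀²)` once `x` is at distance `d₀`
from every support vector, so the kernel expansion is bounded in absolute value by
`(∑ |yᵢ αᵢ|) exp (-γ d₀²)`, which is below `b` for `d₀` large. The set of points at distance
more than `d₀` from every support vector has bounded complement (finitely many balls), hence is
unbounded in a nonzero space.
-/

open Real Filter Topology Bornology Metric

section Decay

variable {E : Type*} [SeminormedAddCommGroup E]

lemma exp_neg_mul_sq_norm_le {γ r : ℝ} (hγ : 0 ≤ γ) (hr : 0 ≤ r) {v : E} (hv : r ≤ ‖v‖) :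
    exp (-γ * ‖v‖ ^ 2) ≤ exp (-γ * r ^ 2) :=
  exp_le_exp.2 <| mul_le_mul_of_nonpos_left (pow_le_pow_left₀ hr hv 2) (neg_nonpos.2 hγ)

lemma abs_sum_mul_exp_neg_mul_sq_norm_le {ι : Type*} [Fintype ι] {γ r : ℝ} (hγ : 0 ≤ γ)
    (hr : 0 ≤ r) (p : ι → E) (c : ι → ℝ) {x : E} (hx : ∀ i, r ≤ ‖x - p i‖) :
    |∑ i, c i * exp (-γ * ‖p i - x‖ ^ 2)| ≤ (∑ i, |c i|) * exp (-γ * r ^ 2) :=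
  calc |∑ i, c i * exp (-γ * ‖p i - x‖ ^ 2)|
      ≤ ∑ i, |c i * exp (-γ * ‖p i - x‖ ^ 2)| := Finset.abs_sum_le_sum_abs _ _
    _ ≤ ∑ i, |c i| * exp (-γ * r ^ 2) := by
        gcongr with i
        rw [abs_mul, abs_exp]
        exact mul_le_mul_of_nonneg_left
          (exp_neg_mul_sq_norm_le hγ hr (norm_sub_rev x (p i) ▸ hx i)) (abs_nonneg _)
    _ = (∑ i, |c i|) * exp (-γ * r ^ 2) := (Finset.sum_mul ..).symm

lemma tendsto_const_mul_exp_neg_mul_sq_atTop {γ : ℝ} (hγ : 0 < γ) (C : ℝ) :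
    Tendsto (fun r : ℝ => C * exp (-γ * r ^ 2)) atTop (𝓝 0) := by
  have hsq : Tendsto (fun r : ℝ => -γ * r ^ 2) atTop atBot := by
    simpa only [neg_mul, Function.comp_def] using
      tendsto_neg_atTop_atBot.comp ((tendsto_pow_atTop two_ne_zero).const_mul_atTop hγ)
  simpa using (Real.tendsto_exp_atBot.comp hsq).const_mul C

theorem exists_pos_forall_pos_sum_mul_exp_neg_mul_sq_norm_add {ι : Type*} [Fintype ι]
    {γ b : ℝ} (hγ : 0 < γ) (hb : 0 < b) (p : ι → E) (c : ι → ℝ) :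
    ∃ r > 0, ∀ x : E, (∀ i, r < ‖x - p i‖) → 0 < ∑ i, c i * exp (-γ * ‖p i - x‖ ^ 2) + b := by
  obtain ⟨r, hsmall, hr⟩ :=
    (((tendsto_const_mul_exp_neg_mul_sq_atTop hγ (∑ i, |c i|)).eventually
      (gt_mem_nhds hb)).and (eventually_gt_atTop 0)).exists
  refine ⟨r, hr, fun x hx => ?_⟩
  have hbound := abs_sum_mul_exp_neg_mul_sq_norm_le hγ.le hr.le p c fun i => (hx i).le
  linarith [neg_abs_le (∑ i, c i * exp (-γ * ‖p i - x‖ ^ 2))]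

end Decay

theorem not_isBounded_setOf_forall_lt_norm_sub {E : Type*} [NormedAddCommGroup E]
    [NormedSpace ℝ E] [Nontrivial E] {ι : Type*} [Finite ι] (p : ι → E) (r : ℝ) :
    ¬ IsBounded {x : E | ∀ i, r < ‖x - p i‖} := by
  intro hfar
  have hnear : IsBounded {x : E | ∀ i, r < ‖x - p i‖}ᶜ :=
    (isBounded_iUnion.2 fun i => isBounded_closedBall (x := p i) (r := r)).subset fun x hx => by
      simpa [dist_eq_norm] using hx
  exact NormedSpace.unbounded_univ ℝ E (by simpa using hfar.union hnear)

theorem positive_bias_unbounded_positive_region_general (d m : ℕ) (γ : ℝ) (hγ : 0 < γ)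
    (xs : Fin m → EuclideanSpace ℝ (Fin d)) (y α : Fin m → ℝ)
    (b : ℝ) (hb : 0 < b) :
    (∃ d₀ > (0 : ℝ), ∀ x : EuclideanSpace ℝ (Fin d), (∀ i, ‖x - xs i‖ > d₀) →
      0 < (∑ i, y i * α i * Real.exp (-γ * ‖xs i - x‖ ^ 2)) + b) ∧
    (1 ≤ d → ¬ Bornology.IsBounded {x : EuclideanSpace ℝ (Fin d) |
      0 < (∑ i, y i * α i * Real.exp (-γ * ‖xs i - x‖ ^ 2)) + b}) := by
  obtain ⟨d₀, hd₀, hpos⟩ :=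
    exists_pos_forall_pos_sum_mul_exp_neg_mul_sq_norm_add hγ hb xs fun i => y i * α i
  refine ⟨⟨d₀, hd₀, hpos⟩, fun hd hbdd => ?_⟩
  have : Nonempty (Fin d) := ⟨⟨0, hd⟩⟩
  exact not_isBounded_setOf_forall_lt_norm_sub xs d₀ (hbdd.subset hpos)

/-- Theorem 1, converse direction: If the bias term b is positive, then
there exists d₀ > 0 such that every x with ‖x − xᵢ‖ > d₀ for all i has positive decision
value; consequently, if d ≥ 1, the positively labeled region is unbounded. -/
theorem positive_bias_unbounded_positive_region (d m : ℕ) (hm : 1 ≤ m) (γ : ℝ) (hγ : 0 < γ)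
    (xs : Fin m → EuclideanSpace ℝ (Fin d)) (y α : Fin m → ℝ)
    (hy : ∀ i, y i = -1 ∨ y i = 1) (hα : ∀ i, 0 ≤ α i)
    (b : ℝ) (hb : 0 < b) :
    (∃ d₀ > (0 : ℝ), ∀ x : EuclideanSpace ℝ (Fin d), (∀ i, ‖x - xs i‖ > d₀) →
      0 < (∑ i, y i * α i * Real.exp (-γ * ‖xs i - x‖ ^ 2)) + b) ∧
    (1 ≤ d → ¬ Bornology.IsBounded {x : EuclideanSpace ℝ (Fin d) |
      0 < (∑ i, y i * α i * Real.exp (-γ * ‖xs i - x‖ ^ 2)) + b}) :=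
  positive_bias_unbounded_positive_region_general d m γ hγ xs y α b hb
end

section
/- (Theorem 1.) Assume d ≥ 1 and b ≠ 0. Then the positively labeled region {x ∈ ℝ^d : Σᵢ₌₁^m yᵢ αᵢ K(xᵢ, x) + b > 0} is a bounded subset of ℝ^d if and only if the bias term b is negative. -/
/-!
Every Gaussian term `exp (-γ ‖xᵢ - x‖²)` vanishes as `x` leaves bounded sets, so the decision
value tends to `b` along the cobounded filter. Hence for `b < 0` the positive region misses a
cobounded set, while for `b > 0` it is itself cobounded, which a bounded set cannot be once
`d ≥ 1` makes the space unbounded.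
-/

open Filter Topology Bornology

theorem tendsto_exp_neg_mul_sq_atTop {γ : ℝ} (hγ : 0 < γ) :
    Tendsto (fun r : ℝ => Real.exp (-γ * r ^ 2)) atTop (𝓝 0) := by
  have h : Tendsto (fun r : ℝ => -γ * r ^ 2) atTop atBot :=
    (tendsto_pow_atTop two_ne_zero).const_mul_atTop_of_neg (neg_neg_of_pos hγ)
  exact Real.tendsto_exp_atBot.comp h

theorem tendsto_sum_mul_exp_neg_mul_norm_sub_sq_cobounded {E ι : Type*}
    [SeminormedAddCommGroup E] [Fintype ι] {γ : ℝ} (hγ : 0 < γ) (c : ι → ℝ) (xs : ι → E) :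
    Tendsto (fun x => ∑ i, c i * Real.exp (-γ * ‖xs i - x‖ ^ 2)) (cobounded E) (𝓝 0) := by
  have hterm (i : ι) : Tendsto (fun x => Real.exp (-γ * ‖xs i - x‖ ^ 2)) (cobounded E) (𝓝 0) :=
    (tendsto_exp_neg_mul_sq_atTop hγ).comp
      (tendsto_norm_cobounded_atTop.comp (tendsto_const_sub_cobounded (xs i)))
  simpa using tendsto_finsetSum Finset.univ fun i _ => (hterm i).const_mul (c i)

theorem isBounded_setOf_pos_iff_of_tendsto_cobounded {E : Type*} [Bornology E]
    [(cobounded E).NeBot] {g : E → ℝ} {b : ℝ} (hg : Tendsto g (cobounded E) (𝓝 b))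
    (hb : b ≠ 0) : IsBounded {x | 0 < g x} ↔ b < 0 := by
  constructor
  · intro hbdd
    by_contra hnonneg
    have hpos : ∀ᶠ x in cobounded E, 0 < g x :=
      hg.eventually (lt_mem_nhds (lt_of_le_of_ne (not_lt.1 hnonneg) hb.symm))
    obtain ⟨x, hx, hx'⟩ := (hpos.and (isBounded_def.1 hbdd)).exists
    exact hx' hx
  · intro hneg
    exact isBounded_def.2 ((hg.eventually (gt_mem_nhds hneg)).mono fun x hx => not_lt.2 hx.le)

theorem bounded_positive_region_iff_negative_bias_general (d m : ℕ) (hd : 1 ≤ d)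
    (γ : ℝ) (hγ : 0 < γ)
    (xs : Fin m → EuclideanSpace ℝ (Fin d)) (y α : Fin m → ℝ)
    (b : ℝ) (hb : b ≠ 0) :
    Bornology.IsBounded {x : EuclideanSpace ℝ (Fin d) |
      0 < (∑ i, y i * α i * Real.exp (-γ * ‖xs i - x‖ ^ 2)) + b} ↔ b < 0 := by
  have : NeZero d := ⟨by omega⟩
  refine isBounded_setOf_pos_iff_of_tendsto_cobounded ?_ hb
  simpa using
    (tendsto_sum_mul_exp_neg_mul_norm_sub_sq_cobounded hγ (fun i => y i * α i) xs).add_const b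

/-- Theorem 1: Assume d ≥ 1 and b ≠ 0. Then the positively labeled region
{x : Σᵢ yᵢ αᵢ K(xᵢ, x) + b > 0} is bounded if and only if the bias term b is negative. -/
theorem bounded_positive_region_iff_negative_bias (d m : ℕ) (hd : 1 ≤ d) (hm : 1 ≤ m)
    (γ : ℝ) (hγ : 0 < γ)
    (xs : Fin m → EuclideanSpace ℝ (Fin d)) (y α : Fin m → ℝ)
    (hy : ∀ i, y i = -1 ∨ y i = 1) (hα : ∀ i, 0 ≤ α i)
    (b : ℝ) (hb : b ≠ 0) :
    Bornology.IsBounded {x : EuclideanSpace ℝ (Fin d) |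
      0 < (∑ i, y i * α i * Real.exp (-γ * ‖xs i - x‖ ^ 2)) + b} ↔ b < 0 :=
  bounded_positive_region_iff_negative_bias_general d m hd γ hγ xs y α b hb
end

section
/- (Proposition 2, bound in Case 1.) Let i be an index with yᵢ = 1, let α₁, …, α_m satisfy 0 ≤ αⱼ ≤ C for all j and Σⱼ₌₁^m αⱼ yⱼ = λ, and suppose the bias term satisfies the KKT expression b = yᵢ − Σⱼ₌₁^m αⱼ yⱼ K(xᵢ, xⱼ). Then b ≤ 1 + C · Σ_{j : yⱼ = 1} (1 − K(xᵢ, xⱼ)) − λ. In particular, if λ > 1 + C · Σ_{j : yⱼ = 1} (1 − K(xᵢ, xⱼ)), then b < 0. -/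
/-! Since `∑ⱼ αⱼ yⱼ = λ`, the bias is `b = 1 - λ + ∑ⱼ αⱼ yⱼ (1 - K(xᵢ, xⱼ))`. Every factor
`1 - K(xᵢ, xⱼ)` is nonnegative, so the terms with `yⱼ = -1` contribute at most `0` and those
with `yⱼ = 1` at most `C (1 - K(xᵢ, xⱼ))`. -/

open Finset

lemma Real.exp_neg_mul_sq_le_one {γ : ℝ} (hγ : 0 ≤ γ) (r : ℝ) : Real.exp (-γ * r ^ 2) ≤ 1 :=
  Real.exp_le_one_iff.2 (by nlinarith [sq_nonneg r])

lemma sum_mul_label_mul_le_mul_sum_filter {ι : Type*} (s : Finset ι) {α y c : ι → ℝ} {C : ℝ}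
    (hy : ∀ j ∈ s, y j = -1 ∨ y j = 1) (hα : ∀ j ∈ s, 0 ≤ α j ∧ α j ≤ C)
    (hc : ∀ j ∈ s, 0 ≤ c j) :
    ∑ j ∈ s, α j * y j * c j ≤ C * ∑ j ∈ s.filter (fun j => y j = 1), c j := by
  rw [Finset.mul_sum, Finset.sum_filter]
  refine Finset.sum_le_sum fun j hj => ?_
  obtain ⟨hα₀, hαC⟩ := hα j hj
  rcases hy j hj with hneg | hpos
  · rw [if_neg (by norm_num [hneg]), hneg]
    nlinarith [hc j hj]
  · rw [if_pos hpos, hpos, mul_one]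
    exact mul_le_mul_of_nonneg_right hαC (hc j hj)

theorem bias_bound_case_one_general (d m : ℕ) (γ : ℝ) (hγ : 0 < γ)
    (xs : Fin m → EuclideanSpace ℝ (Fin d)) (y : Fin m → ℝ)
    (hy : ∀ j, y j = -1 ∨ y j = 1) (C : ℝ)
    (i : Fin m) (hyi : y i = 1)
    (α : Fin m → ℝ) (hα : ∀ j, 0 ≤ α j ∧ α j ≤ C)
    (lam : ℝ) (hlam : ∑ j, α j * y j = lam)
    (b : ℝ) (hb : b = y i - ∑ j, α j * y j * Real.exp (-γ * ‖xs i - xs j‖ ^ 2)) :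
    b ≤ 1 + C * ∑ j ∈ Finset.univ.filter (fun j => y j = 1),
          (1 - Real.exp (-γ * ‖xs i - xs j‖ ^ 2)) - lam ∧
    (1 + C * ∑ j ∈ Finset.univ.filter (fun j => y j = 1),
          (1 - Real.exp (-γ * ‖xs i - xs j‖ ^ 2)) < lam → b < 0) := by
  set K : Fin m → ℝ := fun j => Real.exp (-γ * ‖xs i - xs j‖ ^ 2)
  have hb' : b = 1 - lam + ∑ j, α j * y j * (1 - K j) := by
    simp only [hb, hyi, ← hlam, mul_sub, mul_one, Finset.sum_sub_distrib]
    ring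
  have hsum : ∑ j, α j * y j * (1 - K j) ≤ C * ∑ j ∈ univ.filter (fun j => y j = 1), (1 - K j) :=
    sum_mul_label_mul_le_mul_sum_filter univ (fun j _ => hy j) (fun j _ => hα j)
      fun j _ => sub_nonneg.2 (Real.exp_neg_mul_sq_le_one hγ.le _)
  exact ⟨by linarith, fun h => by linarith⟩

/-- Proposition 2, bound in Case 1: For an index i with yᵢ = 1, feasible
multipliers with Σⱼ αⱼ yⱼ = λ, and bias b = yᵢ − Σⱼ αⱼ yⱼ K(xᵢ, xⱼ), we have
b ≤ 1 + C·Σ_{j : yⱼ = 1} (1 − K(xᵢ, xⱼ)) − λ; in particular, if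
λ > 1 + C·Σ_{j : yⱼ = 1} (1 − K(xᵢ, xⱼ)) then b < 0. -/
theorem bias_bound_case_one (d m : ℕ) (hm : 1 ≤ m) (γ : ℝ) (hγ : 0 < γ)
    (xs : Fin m → EuclideanSpace ℝ (Fin d)) (y : Fin m → ℝ)
    (hy : ∀ j, y j = -1 ∨ y j = 1) (C : ℝ) (hC : 0 < C)
    (i : Fin m) (hyi : y i = 1)
    (α : Fin m → ℝ) (hα : ∀ j, 0 ≤ α j ∧ α j ≤ C)
    (lam : ℝ) (hlam : ∑ j, α j * y j = lam)
    (b : ℝ) (hb : b = y i - ∑ j, α j * y j * Real.exp (-γ * ‖xs i - xs j‖ ^ 2)) :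
    b ≤ 1 + C * ∑ j ∈ Finset.univ.filter (fun j => y j = 1),
          (1 - Real.exp (-γ * ‖xs i - xs j‖ ^ 2)) - lam ∧
    (1 + C * ∑ j ∈ Finset.univ.filter (fun j => y j = 1),
          (1 - Real.exp (-γ * ‖xs i - xs j‖ ^ 2)) < lam → b < 0) :=
  bias_bound_case_one_general d m γ hγ xs y hy C i hyi α hα lam hlam b hb
end

section
/- (Proposition 2, bound in Case 2.) Let i be an index with yᵢ = −1, let α₁, …, α_m satisfy 0 ≤ αⱼ ≤ C for all j and Σⱼ₌₁^m αⱼ yⱼ = λ, and suppose the bias term satisfies the KKT expression b = yᵢ − Σⱼ₌₁^m αⱼ yⱼ K(xᵢ, xⱼ). Then b ≤ −1 + C · Σ_{j : yⱼ = 1} (1 − K(xᵢ, xⱼ)) − λ. In particular, if λ > C · Σ_{j : yⱼ = 1} (1 − K(xᵢ, xⱼ)) − 1, then b < 0. -/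
/-!
Write `b = yᵢ - Σⱼ αⱼ yⱼ + Σⱼ αⱼ yⱼ (1 - K(xᵢ, xⱼ)) = -1 - λ + Σⱼ αⱼ yⱼ (1 - K(xᵢ, xⱼ))`.
Since `0 < K ≤ 1`, every weight `1 - K(xᵢ, xⱼ)` is nonnegative, so the terms with `yⱼ = -1`
contribute at most `0` and those with `yⱼ = 1` at most `C (1 - K(xᵢ, xⱼ))`.
-/

open Finset

lemma Real.exp_neg_mul_norm_sub_sq_le_one {E : Type*} [SeminormedAddCommGroup E] {γ : ℝ}
    (hγ : 0 ≤ γ) (x x' : E) : Real.exp (-γ * ‖x - x'‖ ^ 2) ≤ 1 :=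
  Real.exp_le_one_iff.mpr (by nlinarith [sq_nonneg ‖x - x'‖])

lemma sum_mul_sign_mul_le_mul_sum_filter {ι : Type*} [Fintype ι] {α y w : ι → ℝ} {C : ℝ}
    (hy : ∀ j, y j = -1 ∨ y j = 1) (hα : ∀ j, 0 ≤ α j ∧ α j ≤ C) (hw : ∀ j, 0 ≤ w j) :
    ∑ j, α j * y j * w j ≤ C * ∑ j ∈ univ.filter (fun j => y j = 1), w j := by
  rw [← sum_filter_add_sum_filter_not univ (fun j => y j = 1), mul_sum]
  have hpos : ∑ j ∈ univ.filter (fun j => y j = 1), α j * y j * w j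
      ≤ ∑ j ∈ univ.filter (fun j => y j = 1), C * w j := by
    refine sum_le_sum fun j hj => ?_
    rw [(mem_filter.mp hj).2, mul_one]
    exact mul_le_mul_of_nonneg_right (hα j).2 (hw j)
  have hneg : ∑ j ∈ univ.filter (fun j => ¬ y j = 1), α j * y j * w j ≤ 0 := by
    refine sum_nonpos fun j hj => ?_
    rw [(hy j).resolve_right (mem_filter.mp hj).2]
    nlinarith [(hα j).1, hw j]
  linarith

lemma sub_sum_mul_eq_sub_sum_add_sum_mul_one_sub {ι : Type*} [Fintype ι] (c : ℝ)
    (a K : ι → ℝ) : c - ∑ j, a j * K j = c - ∑ j, a j + ∑ j, a j * (1 - K j) := by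
  simp only [mul_one_sub, sum_sub_distrib]
  ring

theorem bias_bound_case_two_general (d m : ℕ) (γ : ℝ) (hγ : 0 < γ)
    (xs : Fin m → EuclideanSpace ℝ (Fin d)) (y : Fin m → ℝ)
    (hy : ∀ j, y j = -1 ∨ y j = 1) (C : ℝ)
    (i : Fin m) (hyi : y i = -1)
    (α : Fin m → ℝ) (hα : ∀ j, 0 ≤ α j ∧ α j ≤ C)
    (lam : ℝ) (hlam : ∑ j, α j * y j = lam)
    (b : ℝ) (hb : b = y i - ∑ j, α j * y j * Real.exp (-γ * ‖xs i - xs j‖ ^ 2)) :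
    b ≤ -1 + C * ∑ j ∈ Finset.univ.filter (fun j => y j = 1),
          (1 - Real.exp (-γ * ‖xs i - xs j‖ ^ 2)) - lam ∧
    (C * ∑ j ∈ Finset.univ.filter (fun j => y j = 1),
          (1 - Real.exp (-γ * ‖xs i - xs j‖ ^ 2)) - 1 < lam → b < 0) := by
  have hsplit : b = -1 - lam + ∑ j, α j * y j * (1 - Real.exp (-γ * ‖xs i - xs j‖ ^ 2)) := by
    rw [hb, sub_sum_mul_eq_sub_sum_add_sum_mul_one_sub, hyi, hlam]
  have hbound := sum_mul_sign_mul_le_mul_sum_filter hy hα fun j =>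
    sub_nonneg.mpr (Real.exp_neg_mul_norm_sub_sq_le_one hγ.le (xs i) (xs j))
  constructor <;> intros <;> linarith

/-- Proposition 2, bound in Case 2: For an index i with yᵢ = −1, feasible
multipliers with Σⱼ αⱼ yⱼ = λ, and bias b = yᵢ − Σⱼ αⱼ yⱼ K(xᵢ, xⱼ), we have
b ≤ −1 + C·Σ_{j : yⱼ = 1} (1 − K(xᵢ, xⱼ)) − λ; in particular, if
λ > C·Σ_{j : yⱼ = 1} (1 − K(xᵢ, xⱼ)) − 1 then b < 0. -/
theorem bias_bound_case_two (d m : ℕ) (hm : 1 ≤ m) (γ : ℝ) (hγ : 0 < γ)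
    (xs : Fin m → EuclideanSpace ℝ (Fin d)) (y : Fin m → ℝ)
    (hy : ∀ j, y j = -1 ∨ y j = 1) (C : ℝ) (hC : 0 < C)
    (i : Fin m) (hyi : y i = -1)
    (α : Fin m → ℝ) (hα : ∀ j, 0 ≤ α j ∧ α j ≤ C)
    (lam : ℝ) (hlam : ∑ j, α j * y j = lam)
    (b : ℝ) (hb : b = y i - ∑ j, α j * y j * Real.exp (-γ * ‖xs i - xs j‖ ^ 2)) :
    b ≤ -1 + C * ∑ j ∈ Finset.univ.filter (fun j => y j = 1),
          (1 - Real.exp (-γ * ‖xs i - xs j‖ ^ 2)) - lam ∧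
    (C * ∑ j ∈ Finset.univ.filter (fun j => y j = 1),
          (1 - Real.exp (-γ * ‖xs i - xs j‖ ^ 2)) - 1 < lam → b < 0) :=
  bias_bound_case_two_general d m γ hγ xs y hy C i hyi α hα lam hlam b hb
end

section
/- (Proposition 2, existence in Case 1.) Let i be an index with yᵢ = 1, suppose C ≥ 1 and the number m_p of indices j with yⱼ = 1 satisfies m_p ≥ 2. Then there exists λ with 0 ≤ λ < C · m_p such that for all multipliers α₁, …, α_m with 0 ≤ αⱼ ≤ C for all j and Σⱼ₌₁^m αⱼ yⱼ = λ, any bias term given by the KKT expression b = yᵢ − Σⱼ₌₁^m αⱼ yⱼ K(xᵢ, xⱼ) satisfies b < 0. -/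
/-!
Take λ = C·m_p − ε. Since every multiplier is at most C, the constraint Σⱼ αⱼ yⱼ = λ forces the
negative class to carry total mass at most ε and every positive multiplier to be at least C − ε.
Hence in yᵢ − Σⱼ αⱼ yⱼ K(xᵢ, xⱼ) the term j = i contributes at least C − ε ≥ 1 − ε, a second positive
index j₀ contributes at least (C − ε)·κ with κ = K(xᵢ, xⱼ₀) > 0, the negative class removes at most ε,
and ε = κ / 4 makes the total exceed 1.
-/

open Finset

noncomputable def rbfKernel {E : Type*} [SeminormedAddCommGroup E] (γ : ℝ) (x x' : E) : ℝ :=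
  Real.exp (-γ * ‖x - x'‖ ^ 2)

section RBFKernel

variable {E : Type*} [SeminormedAddCommGroup E] (γ : ℝ) (x x' : E)

lemma rbfKernel_pos : 0 < rbfKernel γ x x' := Real.exp_pos _

lemma rbfKernel_le_one {γ : ℝ} (hγ : 0 ≤ γ) : rbfKernel γ x x' ≤ 1 :=
  Real.exp_le_one_iff.mpr (by nlinarith [sq_nonneg ‖x - x'‖])

@[simp]
lemma rbfKernel_self : rbfKernel γ x x = 1 := by simp [rbfKernel]

end RBFKernel

lemma Finset.sub_le_of_card_mul_sub_le_sum {ι : Type*} {s : Finset ι} {f : ι → ℝ} {C ε : ℝ}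
    (hf : ∀ j ∈ s, f j ≤ C) (hsum : C * #s - ε ≤ ∑ j ∈ s, f j) {j : ι} (hj : j ∈ s) :
    C - ε ≤ f j := by
  classical
  have hrest : ∑ k ∈ s.erase j, f k ≤ ∑ _k ∈ s.erase j, C :=
    sum_le_sum fun k hk => hf k (mem_of_mem_erase hk)
  have hconst : C * #s = C + ∑ _k ∈ s.erase j, C := by
    rw [add_sum_erase s (fun _ => C) hj, sum_const, nsmul_eq_mul, mul_comm]
  rw [← add_sum_erase s f hj] at hsum
  linarith

section Labels

variable {ι : Type*} [Fintype ι] {y : ι → ℝ}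

lemma sum_mul_label (hy : ∀ j, y j = -1 ∨ y j = 1) (f : ι → ℝ) :
    ∑ j, f j * y j =
      ∑ j ∈ univ.filter (fun j => y j = 1), f j - ∑ j ∈ univ.filter (fun j => ¬ y j = 1), f j := by
  rw [← sum_filter_add_sum_filter_not univ (fun j => y j = 1), sub_eq_add_neg, ← sum_neg_distrib]
  congr 1 <;> refine sum_congr rfl fun j hj => ?_ <;> simp only [mem_filter] at hj
  · rw [hj.2, mul_one]
  · rw [(hy j).resolve_right hj.2, mul_neg_one]

/-- The kernel values `K j` stand for `K(xᵢ, xⱼ)` at a fixed training point `xᵢ`. -/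
theorem one_lt_sum_mul_label_mul_kernel (hy : ∀ j, y j = -1 ∨ y j = 1) {K : ι → ℝ}
    (hK_nonneg : ∀ j, 0 ≤ K j) (hK_le_one : ∀ j, K j ≤ 1) {i j₀ : ι} (hyi : y i = 1)
    (hyj₀ : y j₀ = 1) (hj₀i : j₀ ≠ i) (hKi : K i = 1) (hKj₀ : 0 < K j₀) {C : ℝ} (hC : 1 ≤ C)
    {α : ι → ℝ} (hα : ∀ j, 0 ≤ α j ∧ α j ≤ C)
    (hsum : ∑ j, α j * y j = C * #(univ.filter (fun j => y j = 1)) - K j₀ / 4) :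
    1 < ∑ j, α j * y j * K j := by
  classical
  set P := univ.filter (fun j => y j = 1)
  set N := univ.filter (fun j => ¬ y j = 1)
  have hiP : i ∈ P := by simp [P, hyi]
  have hj₀P : j₀ ∈ P := by simp [P, hyj₀]
  rw [sum_mul_label hy] at hsum
  have hP_le : ∑ j ∈ P, α j ≤ C * #P := by
    simpa [mul_comm] using sum_le_card_nsmul P α C fun j _ => (hα j).2
  have hN_nonneg : 0 ≤ ∑ j ∈ N, α j := sum_nonneg fun j _ => (hα j).1
  have hP_low : ∀ j ∈ P, C - K j₀ / 4 ≤ α j :=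
    fun j hj => sub_le_of_card_mul_sub_le_sum (fun k _ => (hα k).2) (by linarith) hj
  have hpos : α i + α j₀ * K j₀ ≤ ∑ j ∈ P, α j * K j := by
    have hpair : ∑ j ∈ {i, j₀}, α j * K j = α i + α j₀ * K j₀ := by
      rw [sum_pair hj₀i.symm, hKi, mul_one]
    rw [← hpair]
    exact sum_le_sum_of_subset_of_nonneg (insert_subset hiP (singleton_subset_iff.mpr hj₀P))
      fun j _ _ => mul_nonneg (hα j).1 (hK_nonneg j)
  have hneg : ∑ j ∈ N, α j * K j ≤ ∑ j ∈ N, α j :=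
    sum_le_sum fun j _ => mul_le_of_le_one_right (hα j).1 (hK_le_one j)
  simp_rw [mul_right_comm (α _) (y _)]
  rw [sum_mul_label hy]
  have hi := hP_low i hiP
  have hj₀ := hP_low j₀ hj₀P
  nlinarith [mul_le_mul_of_nonneg_right hj₀ hKj₀.le, hK_le_one j₀]

end Labels

theorem exists_lambda_negative_bias_case_one_general (d m : ℕ) (γ : ℝ) (hγ : 0 < γ)
    (xs : Fin m → EuclideanSpace ℝ (Fin d)) (y : Fin m → ℝ)
    (hy : ∀ j, y j = -1 ∨ y j = 1) (C : ℝ) (hC : 1 ≤ C)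
    (i : Fin m) (hyi : y i = 1)
    (hmp : 2 ≤ (Finset.univ.filter (fun j => y j = 1)).card) :
    ∃ lam : ℝ, 0 ≤ lam ∧
      lam < C * ((Finset.univ.filter (fun j => y j = 1)).card : ℝ) ∧
      ∀ α : Fin m → ℝ, (∀ j, 0 ≤ α j ∧ α j ≤ C) → ∑ j, α j * y j = lam →
        ∀ b : ℝ, b = y i - ∑ j, α j * y j * Real.exp (-γ * ‖xs i - xs j‖ ^ 2) →
          b < 0 := by
  obtain ⟨j₀, hj₀P, hj₀i⟩ := exists_mem_ne hmp i
  have hyj₀ : y j₀ = 1 := (mem_filter.mp hj₀P).2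
  have hκ_pos := rbfKernel_pos γ (xs i) (xs j₀)
  have hκ_le_one := rbfKernel_le_one (xs i) (xs j₀) hγ.le
  have hmp_real : (2 : ℝ) ≤ #(univ.filter (fun j => y j = 1)) := by exact_mod_cast hmp
  refine ⟨C * #(univ.filter (fun j => y j = 1)) - rbfKernel γ (xs i) (xs j₀) / 4,
    by nlinarith, by linarith, ?_⟩
  rintro α hα hsum b rfl
  rw [hyi, sub_neg]
  exact one_lt_sum_mul_label_mul_kernel hy (fun j => (rbfKernel_pos γ (xs i) (xs j)).le)
    (fun j => rbfKernel_le_one (xs i) (xs j) hγ.le) hyi hyj₀ hj₀i (rbfKernel_self γ (xs i))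
    hκ_pos hC hα hsum

/-- Proposition 2, existence in Case 1: Let i satisfy yᵢ = 1, C ≥ 1 and
m_p ≥ 2. Then there exists λ with 0 ≤ λ < C·m_p such that for all feasible multipliers
with Σⱼ αⱼ yⱼ = λ, any KKT bias b = yᵢ − Σⱼ αⱼ yⱼ K(xᵢ, xⱼ) satisfies b < 0. -/
theorem exists_lambda_negative_bias_case_one (d m : ℕ) (hm : 1 ≤ m) (γ : ℝ) (hγ : 0 < γ)
    (xs : Fin m → EuclideanSpace ℝ (Fin d)) (y : Fin m → ℝ)
    (hy : ∀ j, y j = -1 ∨ y j = 1) (C : ℝ) (hC : 1 ≤ C)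
    (i : Fin m) (hyi : y i = 1)
    (hmp : 2 ≤ (Finset.univ.filter (fun j => y j = 1)).card) :
    ∃ lam : ℝ, 0 ≤ lam ∧
      lam < C * ((Finset.univ.filter (fun j => y j = 1)).card : ℝ) ∧
      ∀ α : Fin m → ℝ, (∀ j, 0 ≤ α j ∧ α j ≤ C) → ∑ j, α j * y j = lam →
        ∀ b : ℝ, b = y i - ∑ j, α j * y j * Real.exp (-γ * ‖xs i - xs j‖ ^ 2) →
          b < 0 :=
  exists_lambda_negative_bias_case_one_general d m γ hγ xs y hy C hC i hyi hmp
end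

section
/- (Proposition 2, existence in Case 2.) Let i be an index with yᵢ = −1 and suppose the number m_p of indices j with yⱼ = 1 satisfies m_p ≥ 1. Then for any C > 0 there exists λ with 0 ≤ λ < C · m_p such that for all multipliers α₁, …, α_m with 0 ≤ αⱼ ≤ C for all j and Σⱼ₌₁^m αⱼ yⱼ = λ, any bias term given by the KKT expression b = yᵢ − Σⱼ₌₁^m αⱼ yⱼ K(xᵢ, xⱼ) satisfies b < 0. -/
/-!
Split the multipliers by class. The negative-class multipliers sum to `∑_{y=1} α - λ ≤ C m_p - λ`,
and since `0 < K ≤ 1`, the kernel sum `∑ α y K` is at least minus that amount. Taking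
`λ = max 0 (C m_p - 1/2)` gives `∑ α y K ≥ -1/2`, hence `b ≤ -1 + 1/2 < 0`.
-/

open Finset

lemma rbf_kernel_le_one {E : Type*} [SeminormedAddCommGroup E] {γ : ℝ} (hγ : 0 ≤ γ) (v : E) :
    Real.exp (-γ * ‖v‖ ^ 2) ≤ 1 :=
  Real.exp_le_one_iff.mpr <| by rw [neg_mul, neg_nonpos]; positivity

section SignedSums

variable {ι : Type*} [Fintype ι] {y : ι → ℝ} (hy : ∀ j, y j = -1 ∨ y j = 1)
include hy

lemma sum_mul_sign_eq (α : ι → ℝ) :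
    ∑ j, α j * y j = ∑ j ∈ univ.filter (y · = 1), α j - ∑ j ∈ univ.filter (y · = -1), α j := by
  rw [sum_filter, sum_filter, ← sum_sub_distrib]
  refine sum_congr rfl fun j _ => ?_
  rcases hy j with h | h <;> norm_num [h]

lemma sum_neg_class_le {α : ι → ℝ} {C : ℝ} (hαC : ∀ j, α j ≤ C) :
    ∑ j ∈ univ.filter (y · = -1), α j ≤
      C * ((univ.filter (y · = 1)).card : ℝ) - ∑ j, α j * y j := by
  have hpos : ∑ j ∈ univ.filter (y · = 1), α j ≤ (univ.filter (y · = 1)).card • C :=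
    sum_le_card_nsmul _ _ _ fun j _ => hαC j
  rw [nsmul_eq_mul] at hpos
  rw [sum_mul_sign_eq hy]
  linarith

lemma neg_sum_neg_class_le_sum_mul_sign_mul {α K : ι → ℝ} (hα : ∀ j, 0 ≤ α j)
    (hK : ∀ j, 0 ≤ K j ∧ K j ≤ 1) :
    -∑ j ∈ univ.filter (y · = -1), α j ≤ ∑ j, α j * y j * K j := by
  rw [sum_filter, ← sum_neg_distrib]
  refine sum_le_sum fun j _ => ?_
  rcases hy j with h | h
  · simp only [h, if_true]
    nlinarith [hα j, hK j]
  · norm_num [h]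
    exact mul_nonneg (hα j) (hK j).1

end SignedSums

theorem exists_lambda_negative_bias_case_two_general (d m : ℕ) (γ : ℝ) (hγ : 0 < γ)
    (xs : Fin m → EuclideanSpace ℝ (Fin d)) (y : Fin m → ℝ)
    (hy : ∀ j, y j = -1 ∨ y j = 1) (C : ℝ) (hC : 0 < C)
    (i : Fin m) (hyi : y i = -1)
    (hmp : 1 ≤ (Finset.univ.filter (fun j => y j = 1)).card) :
    ∃ lam : ℝ, 0 ≤ lam ∧
      lam < C * ((Finset.univ.filter (fun j => y j = 1)).card : ℝ) ∧
      ∀ α : Fin m → ℝ, (∀ j, 0 ≤ α j ∧ α j ≤ C) → ∑ j, α j * y j = lam →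
        ∀ b : ℝ, b = y i - ∑ j, α j * y j * Real.exp (-γ * ‖xs i - xs j‖ ^ 2) →
          b < 0 := by
  set mp : ℝ := ((univ.filter (fun j => y j = 1)).card : ℝ)
  have hCmp : 0 < C * mp := mul_pos hC (Nat.cast_pos.mpr hmp)
  refine ⟨max 0 (C * mp - 1 / 2), le_max_left _ _, max_lt hCmp (by linarith), ?_⟩
  rintro α hα hsum b rfl
  have hneg := sum_neg_class_le hy fun j => (hα j).2
  have hker := neg_sum_neg_class_le_sum_mul_sign_mul hy (fun j => (hα j).1)
    fun j => ⟨(Real.exp_pos _).le, rbf_kernel_le_one hγ.le (xs i - xs j)⟩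
  rw [hyi]
  linarith [le_max_right 0 (C * mp - 1 / 2)]

/-- Proposition 2, existence in Case 2: Let i satisfy yᵢ = −1 and m_p ≥ 1.
Then for any C > 0 there exists λ with 0 ≤ λ < C·m_p such that for all feasible
multipliers with Σⱼ αⱼ yⱼ = λ, any KKT bias b = yᵢ − Σⱼ αⱼ yⱼ K(xᵢ, xⱼ) satisfies b < 0. -/
theorem exists_lambda_negative_bias_case_two (d m : ℕ) (hm : 1 ≤ m) (γ : ℝ) (hγ : 0 < γ)
    (xs : Fin m → EuclideanSpace ℝ (Fin d)) (y : Fin m → ℝ)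
    (hy : ∀ j, y j = -1 ∨ y j = 1) (C : ℝ) (hC : 0 < C)
    (i : Fin m) (hyi : y i = -1)
    (hmp : 1 ≤ (Finset.univ.filter (fun j => y j = 1)).card) :
    ∃ lam : ℝ, 0 ≤ lam ∧
      lam < C * ((Finset.univ.filter (fun j => y j = 1)).card : ℝ) ∧
      ∀ α : Fin m → ℝ, (∀ j, 0 ≤ α j ∧ α j ≤ C) → ∑ j, α j * y j = lam →
        ∀ b : ℝ, b = y i - ∑ j, α j * y j * Real.exp (-γ * ‖xs i - xs j‖ ^ 2) →
          b < 0 :=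
  exists_lambda_negative_bias_case_two_general d m γ hγ xs y hy C hC i hyi hmp
end
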